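/- arXiv:0903.4604 — 2 statements merged into one kernel-verified Lean document; each statement's English description precedes it below -/
import Mathlib

section
/- Let L = L₀ ⊕ L₁ be a nilpotent complex Leibniz superalgebra with dim L₀ = n ≥ 3 and dim L₁ = m ≥ 2, such that for every x ∈ L₀ \ L₀² the operator R_x^{n−2} vanishes on L₀ and R_x^{m−1} vanishes on L₁ (i.e., its characteristic sequence (n₁, …, n_k | m₁, …, m_s) satisfies n₁ ≤ n−2 and m₁ ≤ m−1). Suppose L is generated by two elements x₁ ∈ L₀ \ L² and y₁ ∈ L₁ \ L², that dim(L³ ∩ L₀) = n−1, and that [y₁, x₁] ∈ L³. Then the nilindex of L is less than n + m; equivalently, L^{n+m−1} = 0. -/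
/-- A complex Leibniz superalgebra: a complex vector space `V` with an internal
direct-sum decomposition `V = L0 ⊕ L1`, a bilinear bracket respecting the
`ℤ/2`-grading and satisfying the Leibniz superidentity (for homogeneous
second and third arguments). -/
structure LeibnizSuper (V : Type) [AddCommGroup V] [Module ℂ V] where
  bracket : V →ₗ[ℂ] V →ₗ[ℂ] V
  L0 : Submodule ℂ V
  L1 : Submodule ℂ V
  compl : IsCompl L0 L1
  g00 : ∀ a ∈ L0, ∀ b ∈ L0, bracket a b ∈ L0
  g01 : ∀ a ∈ L0, ∀ b ∈ L1, bracket a b ∈ L1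
  g10 : ∀ a ∈ L1, ∀ b ∈ L0, bracket a b ∈ L1
  g11 : ∀ a ∈ L1, ∀ b ∈ L1, bracket a b ∈ L0
  super_jacobi : ∀ (x : V) (α β : Bool) (y z : V),
    y ∈ (if α then L1 else L0) → z ∈ (if β then L1 else L0) →
    bracket x (bracket y z) =
      bracket (bracket x y) z - (if α && β then (-1 : ℂ) else 1) • bracket (bracket x z) y

variable {V : Type} [AddCommGroup V] [Module ℂ V]

/-- Descending central series of a Leibniz superalgebra:
`dcs S k` is `L^{k+1}`, i.e. `dcs S 0 = L¹ = L`. -/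
def LeibnizSuper.dcs (S : LeibnizSuper V) : ℕ → Submodule ℂ V
  | 0 => ⊤
  | k + 1 => Submodule.span ℂ {v | ∃ a ∈ S.dcs k, ∃ b : V, v = S.bracket a b}

/-- Descending central series of the even part `L₀` (a Leibniz algebra):
`dcs0 S k` is `L₀^{k+1}`, i.e. `dcs0 S 0 = L₀`. -/
def LeibnizSuper.dcs0 (S : LeibnizSuper V) : ℕ → Submodule ℂ V
  | 0 => S.L0
  | k + 1 => Submodule.span ℂ {v | ∃ a ∈ S.dcs0 k, ∃ b ∈ S.L0, v = S.bracket a b}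

/-- `G` generates the superalgebra: the smallest linear subspace containing `G`
and closed under the bracket is all of `V`. -/
def LeibnizSuper.generates (S : LeibnizSuper V) (G : Set V) : Prop :=
  ∀ p : Submodule ℂ V, G ⊆ p → (∀ a ∈ p, ∀ b ∈ p, S.bracket a b ∈ p) → p = ⊤

/-- The nilindex: the minimal `s ≥ 1` with `L^s = 0`. -/
noncomputable def LeibnizSuper.nilindex (S : LeibnizSuper V) : ℕ :=
  sInf {s | 1 ≤ s ∧ S.dcs (s - 1) = ⊥}

/-- The characteristic-sequence condition `n₁ ≤ n - 2`, `m₁ ≤ m - 1`: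
for every `x ∈ L₀ \ L₀²` the right multiplication operator `R_x`
satisfies `R_x^{n-2} = 0` on `L₀` and `R_x^{m-1} = 0` on `L₁`. -/
def LeibnizSuper.charSeqLE (S : LeibnizSuper V) (n m : ℕ) : Prop :=
  ∀ x ∈ S.L0, x ∉ S.dcs0 1 →
    (∀ v ∈ S.L0, ((S.bracket.flip x : Module.End ℂ V) ^ (n - 2)) v = 0) ∧
    (∀ v ∈ S.L1, ((S.bracket.flip x : Module.End ℂ V) ^ (m - 1)) v = 0)

namespace LeibnizSuper

open Submodule

variable {V : Type} [AddCommGroup V] [Module ℂ V]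

lemma dcs_succ_def (S : LeibnizSuper V) (k : ℕ) :
    S.dcs (k+1) = Submodule.span ℂ {v | ∃ a ∈ S.dcs k, ∃ b : V, v = S.bracket a b} := rfl

lemma bracket_mem_dcs (S : LeibnizSuper V) {k : ℕ} {a : V} (ha : a ∈ S.dcs k) (b : V) :
    S.bracket a b ∈ S.dcs (k+1) := by
  rw [dcs_succ_def]
  exact subset_span ⟨a, ha, b, rfl⟩

lemma dcs_succ_le (S : LeibnizSuper V) : ∀ k, S.dcs (k+1) ≤ S.dcs k
  | 0 => le_top
  | (k+1) => by
    rw [dcs_succ_def S (k+1)]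
    refine span_le.mpr ?_
    rintro v ⟨a, ha, b, rfl⟩
    exact S.bracket_mem_dcs (S.dcs_succ_le k ha) b

lemma dcs_antitone (S : LeibnizSuper V) : Antitone S.dcs :=
  antitone_nat_of_succ_le S.dcs_succ_le

lemma dcs_graded (S : LeibnizSuper V) :
    ∀ k, S.dcs k ≤ (S.dcs k ⊓ S.L0) ⊔ (S.dcs k ⊓ S.L1)
  | 0 => by
    intro v _
    have hv : v ∈ S.L0 ⊔ S.L1 := by rw [S.compl.sup_eq_top]; exact mem_top
    rcases mem_sup.mp hv with ⟨a, ha, b, hb, rfl⟩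
    exact add_mem_sup (mem_inf.mpr ⟨mem_top, ha⟩) (mem_inf.mpr ⟨mem_top, hb⟩)
  | (k+1) => by
    refine le_trans (le_of_eq (S.dcs_succ_def k)) (span_le.mpr ?_)
    rintro v ⟨a, ha, b, rfl⟩
    rcases mem_sup.mp (S.dcs_graded k ha) with ⟨a0, ha0, a1, ha1, rfl⟩
    rcases mem_sup.mp (S.dcs_graded 0 (mem_top : b ∈ S.dcs 0)) with ⟨b0, hb0, b1, hb1, rfl⟩
    rcases mem_inf.mp ha0 with ⟨ha0d, ha0L⟩
    rcases mem_inf.mp ha1 with ⟨ha1d, ha1L⟩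
    rcases mem_inf.mp hb0 with ⟨-, hb0L⟩
    rcases mem_inf.mp hb1 with ⟨-, hb1L⟩
    simp only [SetLike.mem_coe, map_add, LinearMap.add_apply]
    refine add_mem (add_mem ?_ ?_) (add_mem ?_ ?_)
    · exact mem_sup_left (mem_inf.mpr ⟨S.bracket_mem_dcs ha0d b0, S.g00 a0 ha0L b0 hb0L⟩)
    · exact mem_sup_right (mem_inf.mpr ⟨S.bracket_mem_dcs ha1d b0, S.g10 a1 ha1L b0 hb0L⟩)
    · exact mem_sup_right (mem_inf.mpr ⟨S.bracket_mem_dcs ha0d b1, S.g01 a0 ha0L b1 hb1L⟩)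
    · exact mem_sup_left (mem_inf.mpr ⟨S.bracket_mem_dcs ha1d b1, S.g11 a1 ha1L b1 hb1L⟩)

lemma bracket_dcs_dcs (S : LeibnizSuper V) :
    ∀ (k j : ℕ) (a : V), a ∈ S.dcs j → ∀ b ∈ S.dcs (k+1), S.bracket a b ∈ S.dcs (j+k+2) := by
  intro k
  induction k with
  | zero =>
    intro j a ha b hb
    have hle : S.dcs 1 ≤ (S.dcs (j+2)).comap (S.bracket a) := by
      refine le_trans (le_of_eq (S.dcs_succ_def 0)) (span_le.mpr ?_)
      rintro v ⟨c, -, d, rfl⟩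
      rcases mem_sup.mp (S.dcs_graded 0 (mem_top : c ∈ S.dcs 0)) with ⟨c0, hc0, c1, hc1, rfl⟩
      rcases mem_sup.mp (S.dcs_graded 0 (mem_top : d ∈ S.dcs 0)) with ⟨d0, hd0, d1, hd1, rfl⟩
      rcases mem_inf.mp hc0 with ⟨-, hc0L⟩
      rcases mem_inf.mp hc1 with ⟨-, hc1L⟩
      rcases mem_inf.mp hd0 with ⟨-, hd0L⟩
      rcases mem_inf.mp hd1 with ⟨-, hd1L⟩
      simp only [SetLike.mem_coe, mem_comap, map_add, LinearMap.add_apply]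
      have mem00 := S.super_jacobi a false false c0 d0 hc0L hd0L
      have mem01 := S.super_jacobi a false true c0 d1 hc0L hd1L
      have mem10 := S.super_jacobi a true false c1 d0 hc1L hd0L
      have mem11 := S.super_jacobi a true true c1 d1 hc1L hd1L
      refine add_mem (add_mem ?_ ?_) (add_mem ?_ ?_)
      · rw [mem00]
        exact sub_mem (S.bracket_mem_dcs (S.bracket_mem_dcs ha c0) d0)
          (smul_mem _ _ (S.bracket_mem_dcs (S.bracket_mem_dcs ha d0) c0))
      · rw [mem10]
        exact sub_mem (S.bracket_mem_dcs (S.bracket_mem_dcs ha c1) d0)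
          (smul_mem _ _ (S.bracket_mem_dcs (S.bracket_mem_dcs ha d0) c1))
      · rw [mem01]
        exact sub_mem (S.bracket_mem_dcs (S.bracket_mem_dcs ha c0) d1)
          (smul_mem _ _ (S.bracket_mem_dcs (S.bracket_mem_dcs ha d1) c0))
      · rw [mem11]
        exact sub_mem (S.bracket_mem_dcs (S.bracket_mem_dcs ha c1) d1)
          (smul_mem _ _ (S.bracket_mem_dcs (S.bracket_mem_dcs ha d1) c1))
    exact mem_comap.mp (hle hb)
  | succ k ihk =>
    intro j a ha b hb
    have ihL : ∀ c ∈ S.dcs (k+1), ∀ d : V, S.bracket (S.bracket a c) d ∈ S.dcs (j+k+3) :=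
      fun c hc d => S.bracket_mem_dcs (ihk j a ha c hc) d
    have ihR : ∀ c ∈ S.dcs (k+1), ∀ d : V, S.bracket (S.bracket a d) c ∈ S.dcs (j+k+3) := by
      intro c hc d
      have := ihk (j+1) _ (S.bracket_mem_dcs ha d) c hc
      rwa [show j+1+k+2 = j+k+3 from by omega] at this
    have hle : S.dcs (k+2) ≤ (S.dcs (j+k+3)).comap (S.bracket a) := by
      refine le_trans (le_of_eq (S.dcs_succ_def (k+1))) (span_le.mpr ?_)
      rintro v ⟨c, hc, d, rfl⟩
      rcases mem_sup.mp (S.dcs_graded (k+1) hc) with ⟨c0, hc0, c1, hc1, rfl⟩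
      rcases mem_sup.mp (S.dcs_graded 0 (mem_top : d ∈ S.dcs 0)) with ⟨d0, hd0, d1, hd1, rfl⟩
      rcases mem_inf.mp hc0 with ⟨hc0d, hc0L⟩
      rcases mem_inf.mp hc1 with ⟨hc1d, hc1L⟩
      rcases mem_inf.mp hd0 with ⟨-, hd0L⟩
      rcases mem_inf.mp hd1 with ⟨-, hd1L⟩
      simp only [SetLike.mem_coe, mem_comap, map_add, LinearMap.add_apply]
      have mem00 := S.super_jacobi a false false c0 d0 hc0L hd0L
      have mem01 := S.super_jacobi a false true c0 d1 hc0L hd1L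
      have mem10 := S.super_jacobi a true false c1 d0 hc1L hd0L
      have mem11 := S.super_jacobi a true true c1 d1 hc1L hd1L
      refine add_mem (add_mem ?_ ?_) (add_mem ?_ ?_)
      · rw [mem00]
        exact sub_mem (ihL c0 hc0d d0) (smul_mem _ _ (ihR c0 hc0d d0))
      · rw [mem10]
        exact sub_mem (ihL c1 hc1d d0) (smul_mem _ _ (ihR c1 hc1d d0))
      · rw [mem01]
        exact sub_mem (ihL c0 hc0d d1) (smul_mem _ _ (ihR c0 hc0d d1))
      · rw [mem11]
        exact sub_mem (ihL c1 hc1d d1) (smul_mem _ _ (ihR c1 hc1d d1))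
    have := mem_comap.mp (hle hb)
    rwa [show j+(k+1)+2 = j+k+3 from by omega]

lemma dcs_le_F (S : LeibnizSuper V) {x₁ y₁ : V}
    (htop : span ℂ {x₁, y₁} ⊔ S.dcs 1 = ⊤) (k : ℕ) :
    S.dcs (k+1) ≤ ((S.dcs k).map (S.bracket.flip x₁) ⊔ (S.dcs k).map (S.bracket.flip y₁))
      ⊔ S.dcs (k+2) := by
  refine le_trans (le_of_eq (S.dcs_succ_def k)) (span_le.mpr ?_)
  rintro v ⟨a, ha, b, rfl⟩
  have hb : b ∈ span ℂ {x₁, y₁} ⊔ S.dcs 1 := htop.symm ▸ mem_top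
  rcases mem_sup.mp hb with ⟨p, hp, c, hc, rfl⟩
  rcases Submodule.mem_span_pair.mp hp with ⟨α, β, rfl⟩
  simp only [SetLike.mem_coe, map_add, map_smul]
  refine add_mem (add_mem ?_ ?_) ?_
  · exact smul_mem _ _ (mem_sup_left (mem_sup_left (mem_map.mpr ⟨a, ha, rfl⟩)))
  · exact smul_mem _ _ (mem_sup_left (mem_sup_right (mem_map.mpr ⟨a, ha, rfl⟩)))
  · exact mem_sup_right (S.bracket_dcs_dcs 0 k a ha c hc)

lemma dcs_eq_F (S : LeibnizSuper V) {x₁ y₁ : V}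
    (htop : span ℂ {x₁, y₁} ⊔ S.dcs 1 = ⊤) (hnil : ∃ s, S.dcs s = ⊥) (k : ℕ) :
    S.dcs (k+1) = (S.dcs k).map (S.bracket.flip x₁) ⊔ (S.dcs k).map (S.bracket.flip y₁) := by
  obtain ⟨s, hs⟩ := hnil
  have hbot : S.dcs (k+s) = ⊥ := le_bot_iff.mp (hs ▸ S.dcs_antitone (Nat.le_add_left s k))
  clear hs
  induction s generalizing k with
  | zero =>
    have hbot' : S.dcs k = ⊥ := by simpa using hbot
    have h1 : S.dcs (k+1) = ⊥ := le_bot_iff.mp (hbot' ▸ S.dcs_succ_le k)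
    rw [h1, hbot']
    simp
  | succ s ih =>
    have h2 := ih (k+1) (by rw [show k+1+s = k+(s+1) from by omega]; exact hbot)
    refine le_antisymm ?_ (sup_le ?_ ?_)
    · refine (dcs_le_F S htop k).trans (sup_le le_rfl ?_)
      rw [h2]
      exact sup_le ((Submodule.map_mono (S.dcs_succ_le k)).trans le_sup_left)
        ((Submodule.map_mono (S.dcs_succ_le k)).trans le_sup_right)
    · exact Submodule.map_le_iff_le_comap.mpr fun v hv => mem_comap.mpr (S.bracket_mem_dcs hv x₁)
    · exact Submodule.map_le_iff_le_comap.mpr fun v hv => mem_comap.mpr (S.bracket_mem_dcs hv y₁)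

lemma dcs_stall (S : LeibnizSuper V) {x₁ y₁ : V}
    (htop : span ℂ {x₁, y₁} ⊔ S.dcs 1 = ⊤) (hnil : ∃ s, S.dcs s = ⊥)
    {k : ℕ} (h : S.dcs (k+1) = S.dcs k) : S.dcs k = ⊥ := by
  have hstep : ∀ j, S.dcs (k+j) = S.dcs k := by
    intro j
    induction j with
    | zero => rfl
    | succ j ih =>
      calc S.dcs (k+j+1)
          = (S.dcs (k+j)).map (S.bracket.flip x₁) ⊔ (S.dcs (k+j)).map (S.bracket.flip y₁) :=
            dcs_eq_F S htop hnil _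
        _ = (S.dcs k).map (S.bracket.flip x₁) ⊔ (S.dcs k).map (S.bracket.flip y₁) := by rw [ih]
        _ = S.dcs (k+1) := (dcs_eq_F S htop hnil k).symm
        _ = S.dcs k := h
  obtain ⟨s, hs⟩ := hnil
  have hle : S.dcs (k+s) ≤ S.dcs s := S.dcs_antitone (Nat.le_add_left s k)
  rw [hstep s, hs] at hle
  exact le_bot_iff.mp hle

lemma flip_pow_mem (S : LeibnizSuper V) (g : V) :
    ∀ (a : ℕ) {j : ℕ} {w : V}, w ∈ S.dcs j → ((S.bracket.flip g) ^ a) w ∈ S.dcs (j + a)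
  | 0, j, w, hw => hw
  | (a+1), j, w, hw => by
    rw [pow_succ', Module.End.mul_apply]
    exact S.bracket_mem_dcs (S.flip_pow_mem g a hw) g

lemma flip_pow_L1 (S : LeibnizSuper V) {g : V} (hg : g ∈ S.L0) :
    ∀ (a : ℕ) {w : V}, w ∈ S.L1 → ((S.bracket.flip g) ^ a) w ∈ S.L1
  | 0, w, hw => hw
  | (a+1), w, hw => by
    rw [pow_succ', Module.End.mul_apply]
    exact S.g10 _ (S.flip_pow_L1 hg a hw) g hg

lemma dcs0_one_le (S : LeibnizSuper V) : S.dcs0 1 ≤ S.dcs 1 := by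
  have hdef : S.dcs0 1 = span ℂ {v | ∃ a ∈ S.dcs0 0, ∃ b ∈ S.L0, v = S.bracket a b} := rfl
  rw [hdef]
  refine span_le.mpr ?_
  rintro v ⟨a, ha, b, hb, rfl⟩
  exact S.bracket_mem_dcs (mem_top : a ∈ S.dcs 0) b

lemma depth (S : LeibnizSuper V) {x₁ y₁ : V} (hx₁0 : x₁ ∈ S.L0) (hy₁1 : y₁ ∈ S.L1)
    (ht : S.bracket y₁ y₁ ∈ S.dcs 2) (hy2 : S.bracket y₁ x₁ ∈ S.dcs 2) :
    ∀ (a k : ℕ) (v : V), v ∈ S.dcs k →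
      S.bracket (((S.bracket.flip x₁) ^ a) (S.bracket v y₁)) y₁ ∈ S.dcs (k + a + 3) := by
  intro a
  induction a with
  | zero =>
    intro k v hv
    simp only [pow_zero, Module.End.one_apply]
    have jac := S.super_jacobi v true true y₁ y₁ (by simpa using hy₁1) (by simpa using hy₁1)
    have hite : (if (true && true) = true then (-1:ℂ) else 1) = -1 := by norm_num
    rw [hite, neg_one_smul, sub_neg_eq_add] at jac
    have h2 : S.bracket (S.bracket v y₁) y₁ = (2⁻¹:ℂ) • S.bracket v (S.bracket y₁ y₁) := by
      rw [jac, ← two_smul ℂ, smul_smul]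
      norm_num
    rw [h2]
    exact smul_mem _ _ (S.bracket_dcs_dcs 1 k v hv _ ht)
  | succ a ih =>
    intro k v hv
    have jac2 := S.super_jacobi v true false y₁ x₁ (by simpa using hy₁1) (by simpa using hx₁0)
    have hite : (if (true && false) = true then (-1:ℂ) else 1) = 1 := by norm_num
    rw [hite, one_smul] at jac2
    have hswap : S.bracket (S.bracket v y₁) x₁
        = S.bracket (S.bracket v x₁) y₁ + S.bracket v (S.bracket y₁ x₁) := by
      rw [jac2]; abel
    have hsplit : ((S.bracket.flip x₁) ^ (a+1)) (S.bracket v y₁)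
        = ((S.bracket.flip x₁) ^ a) (S.bracket (S.bracket v x₁) y₁)
          + ((S.bracket.flip x₁) ^ a) (S.bracket v (S.bracket y₁ x₁)) := by
      rw [pow_succ, Module.End.mul_apply]
      have hfl : (S.bracket.flip x₁) (S.bracket v y₁) = S.bracket (S.bracket v y₁) x₁ := rfl
      rw [hfl, hswap, map_add]
    rw [hsplit]
    simp only [map_add, LinearMap.add_apply]
    refine add_mem ?_ ?_
    · have h := ih (k+1) (S.bracket v x₁) (S.bracket_mem_dcs hv x₁)
      rw [show k + (a+1) + 3 = (k+1) + a + 3 from by omega]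
      exact h
    · have hvy2 : S.bracket v (S.bracket y₁ x₁) ∈ S.dcs (k+3) :=
        S.bracket_dcs_dcs 1 k v hv _ hy2
      have h := S.bracket_mem_dcs (S.flip_pow_mem x₁ a hvy2) y₁
      rw [show k + (a+1) + 3 = (k+3) + a + 1 from by omega]
      exact h

end LeibnizSuper

/-- Theorem 3.3 of the paper: case of one generator in `L₀`, one in
`L₁`, with `dim (L³)₀ = n - 1` and `y₂ = [y₁,x₁] ∈ L³`.  The nilindex is less
than `n + m`, i.e. `L^{n+m-1} = 0`. -/
theorem leibnizSuper_nilindex_lt_of_mixed_generators_y2_in_L3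
    {V : Type} [AddCommGroup V] [Module ℂ V] [FiniteDimensional ℂ V]
    (S : LeibnizSuper V) (n m : ℕ) (hn : 3 ≤ n) (hm : 2 ≤ m)
    (hdim0 : Module.finrank ℂ S.L0 = n) (hdim1 : Module.finrank ℂ S.L1 = m)
    (hnilp : ∃ s, S.dcs s = ⊥)
    (hchar : S.charSeqLE n m)
    (x₁ y₁ : V) (hx₁0 : x₁ ∈ S.L0) (hx₁ : x₁ ∉ S.dcs 1)
    (hy₁1 : y₁ ∈ S.L1) (hy₁ : y₁ ∉ S.dcs 1)
    (hgen : S.generates {x₁, y₁})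
    (hL3 : Module.finrank ℂ ↥(S.dcs 2 ⊓ S.L0) = n - 1)
    (hy₂ : S.bracket y₁ x₁ ∈ S.dcs 2) :
    S.dcs (n + m - 2) = ⊥ := by
  classical
  open Submodule LeibnizSuper in
  by_contra H
  -- basic memberships
  have hx0top : x₁ ∈ S.dcs 0 := mem_top
  have hy0top : y₁ ∈ S.dcs 0 := mem_top
  have hu1 : S.bracket x₁ y₁ ∈ S.dcs 1 := S.bracket_mem_dcs hx0top y₁
  have huL1 : S.bracket x₁ y₁ ∈ S.L1 := S.g01 x₁ hx₁0 y₁ hy₁1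
  -- generation
  have htop : span ℂ {x₁, y₁} ⊔ S.dcs 1 = ⊤ := by
    apply hgen
    · intro v hv
      exact mem_sup_left (subset_span hv)
    · intro a _ b _
      exact mem_sup_right (S.bracket_mem_dcs mem_top b)
  have hFeq := fun k => dcs_eq_F S htop hnilp k
  -- A₁ = A₂ (even parts of L² and L³ agree, by the dimension hypothesis hL3)
  have hA1lt : S.dcs 1 ⊓ S.L0 < S.L0 := by
    refine lt_of_le_of_ne inf_le_right fun h => hx₁ ?_
    have hx : x₁ ∈ S.dcs 1 ⊓ S.L0 := h.symm ▸ hx₁0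
    exact (mem_inf.mp hx).1
  have hB1lt : S.dcs 1 ⊓ S.L1 < S.L1 := by
    refine lt_of_le_of_ne inf_le_right fun h => hy₁ ?_
    have hy : y₁ ∈ S.dcs 1 ⊓ S.L1 := h.symm ▸ hy₁1
    exact (mem_inf.mp hy).1
  have hfrA1 : Module.finrank ℂ ↥(S.dcs 1 ⊓ S.L0) < n :=
    hdim0 ▸ Submodule.finrank_lt_finrank_of_lt hA1lt
  have hfrB1 : Module.finrank ℂ ↥(S.dcs 1 ⊓ S.L1) < m :=
    hdim1 ▸ Submodule.finrank_lt_finrank_of_lt hB1lt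
  have hAeq : S.dcs 2 ⊓ S.L0 = S.dcs 1 ⊓ S.L0 := by
    refine Submodule.eq_of_le_of_finrank_le (inf_le_inf_right _ (S.dcs_succ_le 1)) ?_
    rw [hL3]
    omega
  have htA : S.bracket y₁ y₁ ∈ S.dcs 1 ⊓ S.L0 :=
    mem_inf.mpr ⟨S.bracket_mem_dcs hy0top y₁, S.g11 y₁ hy₁1 y₁ hy₁1⟩
  have ht2 : S.bracket y₁ y₁ ∈ S.dcs 2 := by
    rw [← hAeq] at htA
    exact (mem_inf.mp htA).1
  have hxxA : S.bracket x₁ x₁ ∈ S.dcs 1 ⊓ S.L0 :=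
    mem_inf.mpr ⟨S.bracket_mem_dcs hx0top x₁, S.g00 x₁ hx₁0 x₁ hx₁0⟩
  have hxx2 : S.bracket x₁ x₁ ∈ S.dcs 2 := by
    rw [← hAeq] at hxxA
    exact (mem_inf.mp hxxA).1
  -- L² = ℂ·[x₁,y₁] + L³
  have hkey : S.dcs 1 ≤ span ℂ {S.bracket x₁ y₁} ⊔ S.dcs 2 := by
    rw [hFeq 0]
    refine sup_le (Submodule.map_le_iff_le_comap.mpr fun a _ => ?_)
      (Submodule.map_le_iff_le_comap.mpr fun a _ => ?_)
    · have ha : a ∈ span ℂ {x₁, y₁} ⊔ S.dcs 1 := htop.symm ▸ mem_top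
      rcases mem_sup.mp ha with ⟨p, hp, c, hc, rfl⟩
      rcases Submodule.mem_span_pair.mp hp with ⟨α, β, rfl⟩
      refine mem_comap.mpr ?_
      have hfl : (S.bracket.flip x₁) (α • x₁ + β • y₁ + c)
          = α • S.bracket x₁ x₁ + β • S.bracket y₁ x₁ + S.bracket c x₁ := by
        simp [map_add, map_smul, LinearMap.add_apply, LinearMap.smul_apply]
      rw [hfl]
      exact mem_sup_right (add_mem (add_mem (smul_mem _ _ hxx2) (smul_mem _ _ hy₂))
        (S.bracket_mem_dcs hc x₁))
    · have ha : a ∈ span ℂ {x₁, y₁} ⊔ S.dcs 1 := htop.symm ▸ mem_top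
      rcases mem_sup.mp ha with ⟨p, hp, c, hc, rfl⟩
      rcases Submodule.mem_span_pair.mp hp with ⟨α, β, rfl⟩
      refine mem_comap.mpr ?_
      have hfl : (S.bracket.flip y₁) (α • x₁ + β • y₁ + c)
          = α • S.bracket x₁ y₁ + β • S.bracket y₁ y₁ + S.bracket c y₁ := by
        simp [map_add, map_smul, LinearMap.add_apply, LinearMap.smul_apply]
      rw [hfl]
      exact add_mem (add_mem (mem_sup_left (smul_mem _ _ (mem_span_singleton_self _)))
        (mem_sup_right (smul_mem _ _ ht2))) (mem_sup_right (S.bracket_mem_dcs hc y₁))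
  -- non-vanishing and strictness of the chain up to n+m-2
  have hne : ∀ k, k ≤ n+m-2 → S.dcs k ≠ ⊥ := by
    intro k hk hbot
    exact H (le_bot_iff.mp (hbot ▸ S.dcs_antitone hk))
  have hstrict : ∀ k, k ≤ n+m-2 → S.dcs (k+1) < S.dcs k := by
    intro k hk
    exact lt_of_le_of_ne (S.dcs_succ_le k) fun h => hne k hk (dcs_stall S htop hnilp h)
  -- dimension count
  have hchain : ∀ (i k : ℕ), k + i ≤ n+m-2 →
      Module.finrank ℂ ↥(S.dcs (k+i)) + i ≤ Module.finrank ℂ ↥(S.dcs k) := by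
    intro i
    induction i with
    | zero => intro k _; simp
    | succ i ih =>
      intro k hk
      have h1 := Submodule.finrank_lt_finrank_of_lt (hstrict (k+i) (by omega))
      have h2 := ih k (by omega)
      show Module.finrank ℂ ↥(S.dcs (k+i+1)) + (i+1) ≤ Module.finrank ℂ ↥(S.dcs k)
      omega
  have hd1 : Module.finrank ℂ ↥(S.dcs 1) ≤ n+m-2 := by
    have h1 : Module.finrank ℂ ↥(S.dcs 1) ≤
        Module.finrank ℂ ↥((S.dcs 1 ⊓ S.L0) ⊔ (S.dcs 1 ⊓ S.L1)) :=
      Submodule.finrank_mono (S.dcs_graded 1)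
    have h2 := Submodule.finrank_sup_add_finrank_inf_eq (S.dcs 1 ⊓ S.L0) (S.dcs 1 ⊓ S.L1)
    omega
  have hdim : ∀ k, 1 ≤ k → k ≤ n+m-2 → Module.finrank ℂ ↥(S.dcs k) + k = n+m-1 := by
    intro k h1 h2
    have ha := hchain (k-1) 1 (by omega)
    have hb := hchain (n+m-2-k) k (by omega)
    have hz : Module.finrank ℂ ↥(S.dcs (n+m-2)) ≠ 0 := fun h =>
      hne _ le_rfl (Submodule.finrank_eq_zero.mp h)
    rw [show 1+(k-1) = k from by omega] at ha
    rw [show k+(n+m-2-k) = n+m-2 from by omega] at hb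
    omega
  -- one-dimensional extension principle
  have extend : ∀ k w', 1 ≤ k → k+1 ≤ n+m-2 → w' ∈ S.dcs (k+1) → w' ∉ S.dcs (k+2) →
      S.dcs (k+1) = span ℂ {w'} ⊔ S.dcs (k+2) := by
    intro k w' h1 h2 hmem hnmem
    have hle : span ℂ {w'} ⊔ S.dcs (k+2) ≤ S.dcs (k+1) :=
      sup_le (span_le.mpr (Set.singleton_subset_iff.mpr hmem)) (S.dcs_succ_le _)
    have hlt : S.dcs (k+2) < span ℂ {w'} ⊔ S.dcs (k+2) := by
      refine lt_of_le_of_ne le_sup_right fun h => hnmem ?_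
      rw [h]
      exact mem_sup_left (mem_span_singleton_self w')
    have hfr := Submodule.finrank_lt_finrank_of_lt hlt
    have hcor : Module.finrank ℂ ↥(S.dcs (k+1)) ≤ Module.finrank ℂ ↥(S.dcs (k+2)) + 1 := by
      rcases le_or_gt (k+2) (n+m-2) with h | h
      · have e1 := hdim (k+1) (by omega) (by omega)
        have e2 := hdim (k+2) (by omega) h
        omega
      · have e1 := hdim (k+1) (by omega) h2
        omega
    exact (Submodule.eq_of_le_of_finrank_le hle (by omega)).symm
  -- the thread
  have hdepth := depth S hx₁0 hy₁1 ht2 hy₂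
  have thread : ∀ k, 1 ≤ k → k ≤ n+m-2 → ∃ w : V,
      S.dcs k = span ℂ {w} ⊔ S.dcs (k+1) ∧
      ((w = ((S.bracket.flip x₁)^(k-1)) (S.bracket x₁ y₁) ∧ w ∈ S.L1) ∨
       (∃ i, i + 2 ≤ k ∧
         w = ((S.bracket.flip x₁)^(k-i-2))
            (S.bracket (((S.bracket.flip x₁)^i) (S.bracket x₁ y₁)) y₁) ∧
         w ∈ S.L0)) := by
    intro k
    induction k with
    | zero => omega
    | succ k ih =>
      intro _ hk2
      rcases Nat.eq_zero_or_pos k with rfl | hk1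
      · refine ⟨S.bracket x₁ y₁, ?_, Or.inl ⟨by simp, huL1⟩⟩
        exact le_antisymm hkey
          (sup_le (span_le.mpr (Set.singleton_subset_iff.mpr hu1)) (S.dcs_succ_le 1))
      · obtain ⟨w, hspan, htype⟩ := ih hk1 (by omega)
        have hwmem : w ∈ S.dcs k := hspan.ge (mem_sup_left (mem_span_singleton_self w))
        have hs1 : S.dcs (k+1) ≤ (span ℂ {S.bracket w x₁} ⊔ span ℂ {S.bracket w y₁})
            ⊔ S.dcs (k+2) := by
          rw [hFeq k, hspan, Submodule.map_sup, Submodule.map_sup]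
          refine sup_le (sup_le ?_ ?_) (sup_le ?_ ?_)
          · rw [Submodule.map_span, Set.image_singleton]
            exact le_trans le_sup_left le_sup_left
          · exact le_trans (Submodule.map_le_iff_le_comap.mpr fun v hv =>
              mem_comap.mpr (S.bracket_mem_dcs hv x₁)) le_sup_right
          · rw [Submodule.map_span, Set.image_singleton]
            exact le_trans le_sup_right le_sup_left
          · exact le_trans (Submodule.map_le_iff_le_comap.mpr fun v hv =>
              mem_comap.mpr (S.bracket_mem_dcs hv y₁)) le_sup_right
        have hboth : ¬ (S.bracket w x₁ ∈ S.dcs (k+2) ∧ S.bracket w y₁ ∈ S.dcs (k+2)) := by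
          rintro ⟨hb1, hb2⟩
          have hle : S.dcs (k+1) ≤ S.dcs (k+2) :=
            hs1.trans (sup_le (sup_le (span_le.mpr (Set.singleton_subset_iff.mpr hb1))
              (span_le.mpr (Set.singleton_subset_iff.mpr hb2))) le_rfl)
          exact (hstrict (k+1) hk2).not_ge hle
        rcases htype with ⟨hw_eq, hwL1⟩ | ⟨i, hi, hw_eq, hwL0⟩
        · by_cases hx : S.bracket w x₁ ∈ S.dcs (k+2)
          · have hy_not : S.bracket w y₁ ∉ S.dcs (k+2) := fun h => hboth ⟨hx, h⟩
            refine ⟨S.bracket w y₁,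
              extend k _ hk1 hk2 (S.bracket_mem_dcs hwmem y₁) hy_not,
              Or.inr ⟨k-1, by omega, ?_, S.g11 w hwL1 y₁ hy₁1⟩⟩
            rw [show k+1-(k-1)-2 = 0 from by omega, pow_zero, Module.End.one_apply, hw_eq]
          · refine ⟨S.bracket w x₁,
              extend k _ hk1 hk2 (S.bracket_mem_dcs hwmem x₁) hx,
              Or.inl ⟨?_, S.g10 w hwL1 x₁ hx₁0⟩⟩
            rw [show (k+1)-1 = (k-1)+1 from by omega, pow_succ', Module.End.mul_apply, hw_eq]
            rfl
        · have hRyw : S.bracket w y₁ ∈ S.dcs (k+2) := by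
            have hv : ((S.bracket.flip x₁)^i) (S.bracket x₁ y₁) ∈ S.dcs (1+i) :=
              S.flip_pow_mem x₁ i hu1
            have h := hdepth (k-i-2) (1+i) _ hv
            rw [show (1+i)+(k-i-2)+3 = k+2 from by omega] at h
            rw [hw_eq]
            exact h
          have hx_not : S.bracket w x₁ ∉ S.dcs (k+2) := fun h => hboth ⟨h, hRyw⟩
          refine ⟨S.bracket w x₁,
            extend k _ hk1 hk2 (S.bracket_mem_dcs hwmem x₁) hx_not,
            Or.inr ⟨i, by omega, ?_, S.g00 w hwL0 x₁ hx₁0⟩⟩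
          rw [show (k+1)-i-2 = (k-i-2)+1 from by omega, pow_succ', Module.End.mul_apply, hw_eq]
          rfl
  -- extract the top thread element and derive the contradiction
  obtain ⟨w, hspan, htype⟩ := thread (n+m-2) (by omega) le_rfl
  have hw0 : w ≠ 0 := by
    intro h0
    apply hne (n+m-2) le_rfl
    have heq : S.dcs (n+m-2+1) = S.dcs (n+m-2) := by
      rw [hspan, h0]
      simp
    exact dcs_stall S htop hnilp heq
  have hx₁nd : x₁ ∉ S.dcs0 1 := fun h => hx₁ (S.dcs0_one_le h)
  obtain ⟨h0, h1⟩ := hchar x₁ hx₁0 hx₁nd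
  rcases htype with ⟨hw_eq, -⟩ | ⟨i, hi, hw_eq, -⟩
  · apply hw0
    rw [hw_eq, show (n+m-2)-1 = (n+m-2-m) + (m-1) from by omega, pow_add,
      Module.End.mul_apply, h1 _ huL1, map_zero]
  · have him : ((S.bracket.flip x₁)^i) (S.bracket x₁ y₁) ≠ 0 := by
      intro hz
      apply hw0
      rw [hw_eq, hz]
      simp
    have hi2 : i ≤ m - 2 := by
      by_contra hgt
      apply him
      rw [show i = (i-(m-1)) + (m-1) from by omega, pow_add, Module.End.mul_apply,
        h1 _ huL1, map_zero]
    apply hw0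
    have hvL0 : S.bracket (((S.bracket.flip x₁)^i) (S.bracket x₁ y₁)) y₁ ∈ S.L0 :=
      S.g11 _ (S.flip_pow_L1 hx₁0 i huL1) y₁ hy₁1
    rw [hw_eq, show (n+m-2)-i-2 = ((n+m-2)-i-2-(n-2)) + (n-2) from by omega, pow_add,
      Module.End.mul_apply, h0 _ hvL0, map_zero]
end

section
/- Let L = L₀ ⊕ L₁ be a nilpotent complex Leibniz superalgebra with dim L₀ = n ≥ 3 and dim L₁ = m ≥ 2, such that for every x ∈ L₀ \ L₀² the operator R_x^{n−2} vanishes on L₀ and R_x^{m−1} vanishes on L₁ (i.e., its characteristic sequence (n₁, …, n_k | m₁, …, m_s) satisfies n₁ ≤ n−2 and m₁ ≤ m−1). Suppose L is generated by two elements x₁ ∈ L₀ \ L² and y₁ ∈ L₁ \ L², that dim(L³ ∩ L₀) = n−2, and that dim L₀³ ≤ n−4, where L₀³ is the third term of the descending central series of the Leibniz algebra L₀. Then the nilindex of L is less than n + m; equivalently, L^{n+m−1} = 0. -/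
variable {V : Type} [AddCommGroup V] [Module ℂ V]

/-!
Suppose `L^{n+m-1} ≠ 0`. The generators span `L / L²`, so the strictly decreasing chain
`L² ⊋ L³ ⊋ ⋯ ⊋ L^{n+m-1} ⊋ 0` has one-dimensional steps; together with `dim (L³)₀ = n - 2`
this puts `[x, y]` into `L³`, and one of `[x, x]`, `[y, y]` spans `L² / L³`. Multiplying on
the right by `x` or `y` then gives homogeneous representatives `R_x^a R_y^b u` (`u ∈ {x, y}`) of
all the steps. Every factor `R_y` changes the parity of the representative, so the dimensions
of `L₀` and `L₁` bound `b`. As `R_y² = ½ R_z` for `z = [y, y]`, the last representative is a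
multiple of `R_x^a R_z^h v` with `v ∈ {x, y, z}`. The characteristic sequence condition for
`x + c z` gives `(R_x + c R_z)^K v = 0` for all `c ∈ ℂ`; since `R_x` and `R_z` commute up to an
operator raising the filtration by four, comparing coefficients of `c^j` shows that
`R_x^{K-j} R_z^j v` lies one step deeper in the filtration than its degree predicts. This
pushes the last representative into `L^{n+m}`, a contradiction.
-/

open Finset

lemma apply_add_eq_of_forall_succ_lt {f : ℕ → ℕ} {N : ℕ} (hf : ∀ k < N, f (k + 1) < f k)
    (h1 : f 1 ≤ N) (hN : 0 < f N) : ∀ k, 1 ≤ k → k ≤ N → f k + k = N + 1 := by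
  have hup : ∀ k, 1 ≤ k → k ≤ N → f k + k ≤ N + 1 := by
    intro k hk
    induction k, hk using Nat.le_induction with
    | base => omega
    | succ k hk ih => intro hkN; have := hf k (by omega); have := ih (by omega); omega
  have hdown : ∀ j ≤ N, j + 1 ≤ f (N - j) := by
    intro j
    induction j with
    | zero => exact fun _ => hN
    | succ j ih =>
      intro hj
      have := hf (N - (j + 1)) (by omega)
      rw [show N - (j + 1) + 1 = N - j by omega] at this
      have := ih (by omega)
      omega
  intro k hk hkN
  have := hup k hk hkN
  have := hdown (N - k) (by omega)
  rw [Nat.sub_sub_self hkN] at this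
  omega

section

variable {𝕜 M : Type*} [Field 𝕜] [AddCommGroup M] [Module 𝕜 M] {F : ℕ → Submodule 𝕜 M}

lemma le_span_singleton_sup_of_finrank_le [FiniteDimensional 𝕜 M] {p q : Submodule 𝕜 M}
    (hpq : p ≤ q) (hq : Module.finrank 𝕜 q ≤ Module.finrank 𝕜 p + 1) {r : M} (hr : r ∈ q)
    (hrp : r ∉ p) : q ≤ Submodule.span 𝕜 {r} ⊔ p := by
  have hlt : p < Submodule.span 𝕜 {r} ⊔ p :=
    lt_of_le_of_ne le_sup_right fun h =>
      hrp (h ▸ Submodule.mem_sup_left (Submodule.mem_span_singleton_self r))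
  have hle : Submodule.span 𝕜 {r} ⊔ p ≤ q :=
    sup_le ((Submodule.span_singleton_le_iff_mem r q).mpr hr) hpq
  have := Submodule.finrank_lt_finrank_of_lt hlt
  exact (Submodule.eq_of_le_of_finrank_le hle (by omega)).ge

lemma eq_zero_of_forall_sum_pow_smul_eq_zero [Infinite 𝕜] {K : ℕ} {w : ℕ → M}
    (h : ∀ c : 𝕜, ∑ j ∈ range K, c ^ j • w j = 0) {j : ℕ} (hj : j < K) : w j = 0 := by
  refine (Module.forall_dual_apply_eq_zero_iff 𝕜 (w j)).mp fun φ => ?_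
  let p : Polynomial 𝕜 := ∑ i ∈ range K, Polynomial.C (φ (w i)) * Polynomial.X ^ i
  have hp : p = 0 := Polynomial.funext fun c => by
    have := congrArg φ (h c)
    simp only [map_sum, map_smul, map_zero, smul_eq_mul] at this
    simp only [p, Polynomial.eval_finsetSum, Polynomial.eval_mul, Polynomial.eval_C,
      Polynomial.eval_pow, Polynomial.eval_X, Polynomial.eval_zero]
    rw [← this]
    exact sum_congr rfl fun i _ => mul_comm _ _
  simpa [p, Polynomial.finsetSum_coeff, Polynomial.coeff_C_mul_X_pow, hj] using
    congrArg (Polynomial.coeff · j) hp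

def Raises (F : ℕ → Submodule 𝕜 M) (T : Module.End 𝕜 M) (w : ℕ) : Prop :=
  ∀ k, ∀ v ∈ F k, T v ∈ F (k + w)

namespace Raises

variable {T U : Module.End 𝕜 M} {v w : ℕ}

lemma zero (w : ℕ) : Raises F 0 w := fun _ _ _ => zero_mem _

lemma add (hT : Raises F T w) (hU : Raises F U w) : Raises F (T + U) w :=
  fun k x hx => add_mem (hT k x hx) (hU k x hx)

lemma smul (hT : Raises F T w) (c : 𝕜) : Raises F (c • T) w :=
  fun k x hx => Submodule.smul_mem _ c (hT k x hx)

lemma mul (hT : Raises F T v) (hU : Raises F U w) : Raises F (T * U) (v + w) := by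
  intro k x hx
  simpa [add_comm v, add_assoc] using hT _ _ (hU k x hx)

lemma pow (hT : Raises F T w) (s : ℕ) : Raises F (T ^ s) (s * w) := by
  induction s with
  | zero => intro k x hx; simpa using hx
  | succ s ih => simpa [pow_succ, add_mul, add_comm] using ih.mul hT

lemma mono (hF : Antitone F) (hT : Raises F T w) (h : v ≤ w) : Raises F T v :=
  fun k x hx => hF (by omega) (hT k x hx)

lemma mul_pow_sub_pow_mul (hF : Antitone F) (hT : Raises F T 1)
    (hUT : Raises F (U * T - T * U) (w + 1)) (s : ℕ) :
    Raises F (U * T ^ s - T ^ s * U) (s + w) := by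
  induction s with
  | zero => simpa using zero (F := F) _
  | succ s ih =>
    have h : U * T ^ (s + 1) - T ^ (s + 1) * U =
        (U * T ^ s - T ^ s * U) * T + T ^ s * (U * T - T * U) := by
      rw [pow_succ]; noncomm_ring
    rw [h]
    exact ((ih.mul hT).add (((hT.pow s).mul hUT).mono hF (by omega))).mono hF (by omega)

end Raises

def wordSum (P Q : Module.End 𝕜 M) : ℕ → ℕ → Module.End 𝕜 M
  | 0, 0 => 1
  | 0, _ + 1 => 0
  | K + 1, 0 => P * wordSum P Q K 0
  | K + 1, j + 1 => P * wordSum P Q K (j + 1) + Q * wordSum P Q K j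

variable {P Q : Module.End 𝕜 M}

lemma wordSum_eq_zero_of_lt {K j : ℕ} (h : K < j) : wordSum P Q K j = 0 := by
  induction K generalizing j with
  | zero => obtain ⟨j, rfl⟩ : ∃ i, j = i + 1 := ⟨j - 1, by omega⟩; rfl
  | succ K ih =>
    obtain ⟨j, rfl⟩ : ∃ i, j = i + 1 := ⟨j - 1, by omega⟩
    simp [wordSum, ih (show K < j + 1 by omega), ih (show K < j by omega)]

lemma add_smul_pow_eq_sum_wordSum (c : 𝕜) (K : ℕ) :
    (P + c • Q) ^ K = ∑ j ∈ range (K + 1), c ^ j • wordSum P Q K j := by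
  induction K with
  | zero => simp [wordSum]
  | succ K ih =>
    rw [pow_succ', ih, sum_range_succ' _ (K + 1)]
    simp only [wordSum, pow_zero, one_smul, smul_add, sum_add_distrib, add_mul, mul_sum,
      smul_mul_assoc, mul_smul_comm]
    rw [sum_range_succ' (fun j => c ^ j • (P * wordSum P Q K j)),
      sum_range_succ (fun j => c ^ (j + 1) • (P * wordSum P Q K (j + 1))),
      wordSum_eq_zero_of_lt (lt_add_one K)]
    simp only [pow_succ, mul_smul, pow_zero, one_smul, mul_zero, smul_zero, add_zero]
    abel

lemma raises_wordSum_sub (hF : Antitone F) (hP : Raises F P 1) (hQ : Raises F Q 2)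
    (hQP : Raises F (Q * P - P * Q) 4) (K j : ℕ) :
    Raises F (wordSum P Q K j - (K.choose j : 𝕜) • (P ^ (K - j) * Q ^ j)) (K + j + 1) := by
  induction K generalizing j with
  | zero => cases j <;> simpa [wordSum] using Raises.zero _
  | succ K ih =>
    cases j with
    | zero =>
      have h : wordSum P Q (K + 1) 0 - ((K + 1).choose 0 : 𝕜) • (P ^ (K + 1 - 0) * Q ^ 0) =
          P * (wordSum P Q K 0 - (K.choose 0 : 𝕜) • (P ^ (K - 0) * Q ^ 0)) := by
        simp [wordSum, mul_sub, pow_succ']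
      rw [h]
      exact (hP.mul (ih 0)).mono hF (by omega)
    | succ j =>
      rcases lt_or_ge K j with hKj | hjK
      · simpa [wordSum_eq_zero_of_lt (show K + 1 < j + 1 by omega),
          Nat.choose_eq_zero_of_lt (show K + 1 < j + 1 by omega)] using Raises.zero _
      have hpow : (K.choose (j + 1) : 𝕜) • (P * P ^ (K - (j + 1))) =
          (K.choose (j + 1) : 𝕜) • P ^ (K - j) := by
        rcases hjK.lt_or_eq with hjK | rfl
        · rw [← pow_succ', show K - (j + 1) + 1 = K - j by omega]
        · simp
      -- Pascal's rule, after moving `Q` past `P ^ (K - j)` at the cost of a commutator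
      have h : wordSum P Q (K + 1) (j + 1) -
            ((K + 1).choose (j + 1) : 𝕜) • (P ^ (K + 1 - (j + 1)) * Q ^ (j + 1)) =
          P * (wordSum P Q K (j + 1) - (K.choose (j + 1) : 𝕜) • (P ^ (K - (j + 1)) * Q ^ (j + 1)))
            + Q * (wordSum P Q K j - (K.choose j : 𝕜) • (P ^ (K - j) * Q ^ j))
            + (K.choose j : 𝕜) • ((Q * P ^ (K - j) - P ^ (K - j) * Q) * Q ^ j) := by
        rw [Nat.choose_succ_succ', Nat.cast_add, add_smul, Nat.add_sub_add_right, wordSum]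
        simp only [mul_sub, sub_mul, mul_smul_comm, smul_sub, ← mul_assoc, ← smul_mul_assoc, hpow]
        simp only [mul_assoc, ← pow_succ']
        abel
      rw [h]
      refine (((hP.mul (ih (j + 1))).mono hF ?_).add ((hQ.mul (ih j)).mono hF ?_)).add
        ((((Raises.mul_pow_sub_pow_mul hF hP hQP (K - j)).mul (hQ.pow j)).smul _).mono hF ?_)
        <;> omega

variable [CharZero 𝕜] {v : M} {ℓ K : ℕ}

lemma pow_mul_pow_apply_mem (hF : Antitone F) (hP : Raises F P 1) (hQ : Raises F Q 2)
    (hQP : Raises F (Q * P - P * Q) 4) (hv : v ∈ F ℓ) (h : ∀ c : 𝕜, ((P + c • Q) ^ K) v = 0)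
    {j : ℕ} (hj : j ≤ K) : (P ^ (K - j) * Q ^ j) v ∈ F (ℓ + K + j + 1) := by
  have hW : wordSum P Q K j v = 0 :=
    eq_zero_of_forall_sum_pow_smul_eq_zero (K := K + 1) (w := fun i => wordSum P Q K i v)
      (fun c => by simpa [add_smul_pow_eq_sum_wordSum] using h c) (by omega)
  have hmem := raises_wordSum_sub hF hP hQ hQP K j ℓ v hv
  rw [LinearMap.sub_apply, hW, zero_sub, neg_mem_iff, LinearMap.smul_apply] at hmem
  have hC : (K.choose j : 𝕜) ≠ 0 := by exact_mod_cast (Nat.choose_pos hj).ne'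
  simpa [add_assoc] using (Submodule.smul_mem_iff _ hC).mp hmem

lemma pow_mul_pow_apply_mem_of_le (hF : Antitone F) (hP : Raises F P 1) (hQ : Raises F Q 2)
    (hQP : Raises F (Q * P - P * Q) 4) (hv : v ∈ F ℓ) (h : ∀ c : 𝕜, ((P + c • Q) ^ K) v = 0)
    {A H : ℕ} (hK : K ≤ A + H) : (P ^ A * Q ^ H) v ∈ F (ℓ + A + 2 * H + 1) := by
  rcases le_total H K with hHK | hKH
  · have hmem := (hP.pow (A - (K - H))) _ _ (pow_mul_pow_apply_mem hF hP hQ hQP hv h hHK)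
    rw [← Module.End.mul_apply, ← mul_assoc, ← pow_add, Nat.sub_add_cancel (by omega)] at hmem
    exact hF (by omega) hmem
  · have hmem := ((hP.pow A).mul (hQ.pow (H - K))) _ _
      (pow_mul_pow_apply_mem hF hP hQ hQP hv h le_rfl)
    rw [Nat.sub_self, pow_zero, one_mul, ← Module.End.mul_apply, mul_assoc, ← pow_add,
      Nat.sub_add_cancel hKH] at hmem
    exact hF (by omega) hmem

end

namespace LeibnizSuper

open Module Submodule

variable (S : LeibnizSuper V)

def grade (α : Bool) : Submodule ℂ V := if α then S.L1 else S.L0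

noncomputable def gradedFinrank (α : Bool) (k : ℕ) : ℕ := finrank ℂ ↥(S.dcs k ⊓ S.grade α)

noncomputable abbrev rmul (b : V) : Module.End ℂ V := S.bracket.flip b

variable {S}

@[simp] lemma rmul_apply (b v : V) : S.rmul b v = S.bracket v b := rfl

lemma bracket_mem_grade {α β : Bool} {a b : V} (ha : a ∈ S.grade α) (hb : b ∈ S.grade β) :
    S.bracket a b ∈ S.grade (α ^^ β) := by
  cases α <;> cases β
  exacts [S.g00 a ha b hb, S.g01 a ha b hb, S.g10 a ha b hb, S.g11 a ha b hb]

lemma bracket_mem_of_homogeneous (B : V →ₗ[ℂ] V →ₗ[ℂ] V) {p P : Submodule ℂ V}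
    (hp : p ≤ p ⊓ S.L0 ⊔ p ⊓ S.L1)
    (h : ∀ α β, ∀ a ∈ p ⊓ S.grade α, ∀ b ∈ S.grade β, B a b ∈ P) {a : V} (ha : a ∈ p) (b : V) :
    B a b ∈ P := by
  obtain ⟨a₀, ha₀, a₁, ha₁, rfl⟩ := mem_sup.mp (hp ha)
  obtain ⟨b₀, hb₀, b₁, hb₁, rfl⟩ := mem_sup.mp (S.compl.sup_eq_top ▸ mem_top : b ∈ S.L0 ⊔ S.L1)
  simp only [map_add, LinearMap.add_apply]
  exact add_mem (add_mem (h false false _ ha₀ _ hb₀) (h true false _ ha₁ _ hb₀))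
    (add_mem (h false true _ ha₀ _ hb₁) (h true true _ ha₁ _ hb₁))

lemma mem_dcs_zero (v : V) : v ∈ S.dcs 0 := mem_top

lemma dcs_succ_le_iff {k : ℕ} {p : Submodule ℂ V} :
    S.dcs (k + 1) ≤ p ↔ ∀ a ∈ S.dcs k, ∀ b, S.bracket a b ∈ p := by
  refine span_le.trans ⟨fun h a ha b => h ⟨a, ha, b, rfl⟩, ?_⟩
  rintro h _ ⟨a, ha, b, rfl⟩
  exact h a ha b

lemma bracket_mem_dcs_succ {k : ℕ} {a : V} (ha : a ∈ S.dcs k) (b : V) :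
    S.bracket a b ∈ S.dcs (k + 1) :=
  dcs_succ_le_iff.mp le_rfl a ha b

lemma dcs_antitone_s2 : Antitone S.dcs := by
  refine antitone_nat_of_succ_le fun k => ?_
  induction k with
  | zero => exact le_top
  | succ k ih => exact dcs_succ_le_iff.mpr fun a ha b => bracket_mem_dcs_succ (ih ha) b

lemma dcs_le_inf_sup_inf (k : ℕ) : S.dcs k ≤ S.dcs k ⊓ S.L0 ⊔ S.dcs k ⊓ S.L1 := by
  induction k with
  | zero => simp [dcs, S.compl.sup_eq_top]
  | succ k ih =>
    refine dcs_succ_le_iff.mpr fun a ha b => bracket_mem_of_homogeneous S.bracket ih ?_ ha b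
    rintro α β a ⟨ha, haα⟩ b hb
    have hab : S.bracket a b ∈ S.dcs (k + 1) ⊓ S.grade (α ^^ β) :=
      ⟨bracket_mem_dcs_succ ha b, bracket_mem_grade haα hb⟩
    generalize (α ^^ β) = γ at hab
    cases γ
    exacts [mem_sup_left hab, mem_sup_right hab]

lemma finrank_dcs_eq_add [FiniteDimensional ℂ V] (k : ℕ) :
    finrank ℂ (S.dcs k) = S.gradedFinrank false k + S.gradedFinrank true k := by
  have hdisj : S.dcs k ⊓ S.L0 ⊓ (S.dcs k ⊓ S.L1) = ⊥ :=
    eq_bot_iff.mpr fun v hv => S.compl.disjoint.eq_bot ▸ (⟨hv.1.2, hv.2.2⟩ : v ∈ S.L0 ⊓ S.L1)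
  have := finrank_sup_add_finrank_inf_eq (S.dcs k ⊓ S.L0) (S.dcs k ⊓ S.L1)
  rwa [le_antisymm (sup_le inf_le_left inf_le_left) (S.dcs_le_inf_sup_inf k), hdisj,
    finrank_bot, add_zero] at this

lemma bracket_mem_dcs_add {i j : ℕ} {a b : V} (ha : a ∈ S.dcs i) (hb : b ∈ S.dcs j) :
    S.bracket a b ∈ S.dcs (i + j + 1) := by
  induction j generalizing i a b with
  | zero => exact bracket_mem_dcs_succ ha b
  | succ j ih =>
    suffices S.dcs (j + 1) ≤ (S.dcs (i + (j + 1) + 1)).comap (S.bracket a) from this hb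
    refine dcs_succ_le_iff.mpr fun c hc d => ?_
    refine bracket_mem_of_homogeneous (P := S.dcs (i + (j + 1) + 1))
      (S.bracket.compr₂ (S.bracket a)) (S.dcs_le_inf_sup_inf j) ?_ hc d
    rintro α β c ⟨hc, hcα⟩ d hd
    rw [LinearMap.compr₂_apply, S.super_jacobi a α β c d hcα hd]
    refine sub_mem ?_ (smul_mem _ _ ?_)
    · simpa [add_assoc] using bracket_mem_dcs_succ (ih ha hc) d
    · simpa [add_assoc, add_comm, add_left_comm] using ih (bracket_mem_dcs_succ ha d) hc

lemma dcs_eq_bot_of_dcs_succ_eq (hnilp : ∃ s, S.dcs s = ⊥) {k : ℕ}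
    (h : S.dcs (k + 1) = S.dcs k) : S.dcs k = ⊥ := by
  have hconst : ∀ i, S.dcs (k + i) = S.dcs k := by
    intro i
    induction i with
    | zero => rfl
    | succ i ih =>
      rw [← h, ← add_assoc]
      simp only [dcs, ih]
  obtain ⟨s, hs⟩ := hnilp
  exact eq_bot_iff.mpr (hconst s ▸ S.dcs_antitone_s2 (Nat.le_add_left s k) |>.trans hs.le)

lemma dcs_succ_lt (hnilp : ∃ s, S.dcs s = ⊥) {N k : ℕ} (hN : S.dcs N ≠ ⊥) (hk : k ≤ N) :
    S.dcs (k + 1) < S.dcs k :=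
  lt_of_le_of_ne (S.dcs_antitone_s2 k.le_succ) fun h =>
    hN (eq_bot_iff.mpr ((S.dcs_antitone_s2 hk).trans (S.dcs_eq_bot_of_dcs_succ_eq hnilp h).le))

lemma dcs0_one_le_dcs_one : S.dcs0 1 ≤ S.dcs 1 :=
  span_le.mpr fun _ ⟨a, _, b, _, h⟩ => h ▸ bracket_mem_dcs_succ (mem_dcs_zero a) b

lemma dcs_one_sup_span_eq_top {x y : V} (hgen : S.generates {x, y}) :
    S.dcs 1 ⊔ span ℂ {x, y} = ⊤ :=
  hgen _ (fun _ hv => mem_sup_right (subset_span hv)) fun a _ b _ =>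
    mem_sup_left (bracket_mem_dcs_succ (mem_dcs_zero a) b)

lemma dcs_succ_le_span_image2_sup {G R : Set V} (hG : S.dcs 1 ⊔ span ℂ G = ⊤) {k : ℕ}
    (hR : S.dcs k ≤ span ℂ R ⊔ S.dcs (k + 1)) :
    S.dcs (k + 1) ≤ span ℂ (Set.image2 (fun r g => S.bracket r g) R G) ⊔ S.dcs (k + 2) := by
  refine dcs_succ_le_iff.mpr fun a ha b => ?_
  obtain ⟨s, hs, a', ha', rfl⟩ := mem_sup.mp (hR ha)
  obtain ⟨b', hb', t, ht, rfl⟩ := mem_sup.mp (hG ▸ mem_top : b ∈ S.dcs 1 ⊔ span ℂ G)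
  have hst : S.bracket s t ∈ span ℂ (Set.image2 (fun r g => S.bracket r g) R G) :=
    map₂_span_span ℂ S.bracket R G ▸ apply_mem_map₂ S.bracket hs ht
  have hrest : S.bracket (s + a') b' + S.bracket a' t ∈ S.dcs (k + 2) :=
    add_mem (bracket_mem_dcs_add ha hb') (bracket_mem_dcs_succ ha' t)
  have hsplit : S.bracket (s + a') (b' + t) =
      S.bracket s t + (S.bracket (s + a') b' + S.bracket a' t) := by
    simp only [map_add, LinearMap.add_apply]
    abel
  rw [hsplit]
  exact add_mem_sup hst hrest

lemma exists_bracket_not_mem_dcs {G R : Set V} (hG : S.dcs 1 ⊔ span ℂ G = ⊤) {k : ℕ}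
    (hR : S.dcs k ≤ span ℂ R ⊔ S.dcs (k + 1)) (hk : ¬ S.dcs (k + 1) ≤ S.dcs (k + 2)) :
    ∃ r ∈ R, ∃ g ∈ G, S.bracket r g ∉ S.dcs (k + 2) := by
  by_contra! h
  refine hk ((dcs_succ_le_span_image2_sup hG hR).trans (sup_le (span_le.mpr ?_) le_rfl))
  rintro _ ⟨r, hr, g, hg, rfl⟩
  exact h r hr g hg

lemma gradedFinrank_succ_le [FiniteDimensional ℂ V] (α : Bool) (k : ℕ) :
    S.gradedFinrank α (k + 1) ≤ S.gradedFinrank α k :=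
  finrank_mono (inf_le_inf_right _ (S.dcs_antitone_s2 k.le_succ))

lemma gradedFinrank_succ_lt [FiniteDimensional ℂ V] {α : Bool} {k : ℕ} {r : V}
    (hr : r ∈ S.dcs k ⊓ S.grade α) (hr' : r ∉ S.dcs (k + 1)) :
    S.gradedFinrank α (k + 1) < S.gradedFinrank α k :=
  finrank_lt_finrank_of_lt <| lt_of_le_of_ne (inf_le_inf_right _ (S.dcs_antitone_s2 k.le_succ))
    fun h => hr' (h.ge hr).1

lemma gradedFinrank_one_lt [FiniteDimensional ℂ V] {α : Bool} {x : V} (hx : x ∈ S.grade α)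
    (hx' : x ∉ S.dcs 1) : S.gradedFinrank α 1 < finrank ℂ (S.grade α) :=
  finrank_lt_finrank_of_lt <| lt_of_le_of_ne inf_le_right fun h => hx' (h.ge hx).1

lemma raises_rmul {b : V} {c : ℕ} (hb : b ∈ S.dcs c) : Raises S.dcs (S.rmul b) (c + 1) :=
  fun _ _ hv => by simpa [add_assoc] using bracket_mem_dcs_add hv hb

lemma rmul_mul_sub_mul_rmul {β : Bool} {x y : V} (hx : x ∈ S.L0) (hy : y ∈ S.grade β) :
    S.rmul y * S.rmul x - S.rmul x * S.rmul y = S.rmul (S.bracket x y) := by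
  ext v
  simp [S.super_jacobi v false β x y hx hy]

lemma rmul_pow_two_mul {y : V} (hy : y ∈ S.L1) (h : ℕ) :
    S.rmul y ^ (2 * h) = (2⁻¹ : ℂ) ^ h • S.rmul (S.bracket y y) ^ h := by
  have hsq : S.rmul y ^ 2 = (2⁻¹ : ℂ) • S.rmul (S.bracket y y) := by
    ext v
    simp [sq, S.super_jacobi v true true y y hy hy, ← two_smul ℂ]
  rw [pow_mul, hsq, smul_pow]

lemma exists_bracket_self_not_mem_dcs_two {x y : V} (htop : S.dcs 1 ⊔ span ℂ {x, y} = ⊤)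
    (hxy : S.bracket x y ∈ S.dcs 2) (hyx : S.bracket y x ∈ S.dcs 2)
    (h12 : ¬ S.dcs 1 ≤ S.dcs 2) :
    ∃ αu : Bool, S.bracket (cond αu y x) (cond αu y x) ∉ S.dcs 2 := by
  obtain ⟨r, hr, g, hg, hrg⟩ := exists_bracket_not_mem_dcs htop (R := {x, y}) (k := 0)
    (by rw [sup_comm, htop]; exact le_top) h12
  rcases hr with rfl | rfl <;> rcases hg with rfl | rfl
  exacts [⟨false, hrg⟩, (hrg hxy).elim, (hrg hyx).elim, ⟨true, hrg⟩]

lemma rmul_apply_pow_mul_pow_sub_mem {x y : V} (hx : x ∈ S.L0) (hy : y ∈ S.L1)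
    (hxy : S.bracket x y ∈ S.dcs 2) (u : V) (a b : ℕ) :
    S.rmul y ((S.rmul x ^ a * S.rmul y ^ b) u) - (S.rmul x ^ a * S.rmul y ^ (b + 1)) u ∈
      S.dcs (a + b + 2) := by
  have hcomm := (Raises.mul_pow_sub_pow_mul S.dcs_antitone_s2 (raises_rmul (mem_dcs_zero x))
    (rmul_mul_sub_mul_rmul (β := true) hx hy ▸ raises_rmul hxy) a) _ _
    ((raises_rmul (mem_dcs_zero y)).pow b 0 u (mem_dcs_zero u))
  have heq : S.rmul y ((S.rmul x ^ a * S.rmul y ^ b) u) -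
      (S.rmul x ^ a * S.rmul y ^ (b + 1)) u =
      (S.rmul y * S.rmul x ^ a - S.rmul x ^ a * S.rmul y) ((S.rmul y ^ b) u) := by
    simp only [LinearMap.sub_apply, Module.End.mul_apply, pow_succ']
  rw [heq]
  exact S.dcs_antitone_s2 (by omega) hcomm

/-- The two inequalities bound the number `b` of factors `R_y`: each of them switches the parity
of the representative `r`, and every maximal run of odd (even) representatives uses up
dimensions of `L₁` (`L₀`). -/
def Chain (S : LeibnizSuper V) (x y : V) (αu : Bool) (k : ℕ) : Prop :=
  ∃ r α a b, r ∈ S.dcs k ⊓ S.grade α ∧ r ∉ S.dcs (k + 1) ∧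
    r - (S.rmul x ^ a * S.rmul y ^ b) (cond αu y x) ∈ S.dcs (k + 1) ∧ a + b = k ∧
    α = (αu ^^ b.bodd) ∧
    b + 2 * S.gradedFinrank true (k + 1) + α.toNat ≤ 2 * S.gradedFinrank true 1 + 1 ∧
    b + 1 + 2 * S.gradedFinrank false (k + 1) ≤ 2 * S.gradedFinrank false 1 + α.toNat

lemma chain_one [FiniteDimensional ℂ V] {x y : V} (hx : x ∈ S.L0) (hy : y ∈ S.L1) {αu : Bool}
    (huu : S.bracket (cond αu y x) (cond αu y x) ∉ S.dcs 2) : S.Chain x y αu 1 := by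
  have hu : cond αu y x ∈ S.grade αu := by cases αu <;> assumption
  have hr : S.bracket (cond αu y x) (cond αu y x) ∈ S.dcs 1 ⊓ S.grade false :=
    ⟨bracket_mem_dcs_succ (mem_dcs_zero _) _, by simpa using bracket_mem_grade hu hu⟩
  have h0 : S.gradedFinrank false 2 < S.gradedFinrank false 1 := gradedFinrank_succ_lt hr huu
  have h1 : S.gradedFinrank true 2 ≤ S.gradedFinrank true 1 := S.gradedFinrank_succ_le true 1
  refine ⟨_, false, cond αu 0 1, cond αu 1 0, hr, huu, ?_, ?_, ?_, ?_, ?_⟩ <;>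
    cases αu <;>
    simp only [Nat.reduceAdd, cond_false, cond_true, pow_zero, pow_one, mul_one, one_mul,
      LinearMap.flip_apply, sub_self, zero_mem, add_zero, zero_add, Nat.bodd_zero, Nat.bodd_succ,
      Bool.not_false, bne_self_eq_false, Bool.toNat_false] <;>
    omega

lemma chain_succ [FiniteDimensional ℂ V] {x y : V} {αu : Bool} {k : ℕ} (hx : x ∈ S.L0)
    (hy : y ∈ S.L1) (hxy : S.bracket x y ∈ S.dcs 2) (htop : S.dcs 1 ⊔ span ℂ {x, y} = ⊤)
    (hk : finrank ℂ (S.dcs k) ≤ finrank ℂ (S.dcs (k + 1)) + 1)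
    (hk' : ¬ S.dcs (k + 1) ≤ S.dcs (k + 2)) (h : S.Chain x y αu k) :
    S.Chain x y αu (k + 1) := by
  obtain ⟨r, α, a, b, hr, hr', hnf, hab, hα, h1, h0⟩ := h
  obtain ⟨_, hr₀, g, hg, hrg⟩ := exists_bracket_not_mem_dcs htop
    (le_span_singleton_sup_of_finrank_le (S.dcs_antitone_s2 k.le_succ) hk hr.1 hr') hk'
  obtain hg | hg : g = x ∨ g = y := hg
  all_goals
    rw [Set.mem_singleton_iff.mp hr₀, hg] at hrg
    have h1' := S.gradedFinrank_succ_le true (k + 1)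
    have h0' := S.gradedFinrank_succ_le false (k + 1)
  · refine ⟨_, α, a + 1, b, ⟨bracket_mem_dcs_succ hr.1 x,
      by simpa using bracket_mem_grade (β := false) hr.2 hx⟩, hrg, ?_, by omega, hα, by omega,
      by omega⟩
    have := raises_rmul (mem_dcs_zero x) _ _ hnf
    rw [map_sub] at this
    rw [pow_succ', mul_assoc, Module.End.mul_apply]
    simpa using this
  · have hmem : S.bracket r y ∈ S.dcs (k + 1) ⊓ S.grade (!α) :=
      ⟨bracket_mem_dcs_succ hr.1 y, by simpa using bracket_mem_grade (β := true) hr.2 hy⟩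
    have hlt := gradedFinrank_succ_lt hmem hrg
    refine ⟨_, !α, a, b + 1, hmem, hrg, ?_, by omega, by simp [hα, Nat.bodd_succ], ?_, ?_⟩
    · have hsplit : S.bracket r y - (S.rmul x ^ a * S.rmul y ^ (b + 1)) (cond αu y x) =
          S.rmul y (r - (S.rmul x ^ a * S.rmul y ^ b) (cond αu y x)) +
            (S.rmul y ((S.rmul x ^ a * S.rmul y ^ b) (cond αu y x)) -
              (S.rmul x ^ a * S.rmul y ^ (b + 1)) (cond αu y x)) := by
        rw [map_sub, rmul_apply]
        abel
      rw [hsplit]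
      exact add_mem (by simpa using raises_rmul (mem_dcs_zero y) _ _ hnf)
        (S.dcs_antitone_s2 (by omega) (rmul_apply_pow_mul_pow_sub_mem hx hy hxy _ a b))
    all_goals
      cases α <;>
      simp only [Bool.not_true, Bool.not_false, Bool.toNat_true, Bool.toNat_false] at h0 h1 hlt ⊢ <;>
      omega

lemma chain_of_le [FiniteDimensional ℂ V] {x y : V} {αu : Bool} {N : ℕ} (hx : x ∈ S.L0)
    (hy : y ∈ S.L1) (hxy : S.bracket x y ∈ S.dcs 2) (htop : S.dcs 1 ⊔ span ℂ {x, y} = ⊤)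
    (hrank : ∀ k, 1 ≤ k → k ≤ N → finrank ℂ (S.dcs k) + k = N + 1)
    (hlt : ∀ k ≤ N, S.dcs (k + 1) < S.dcs k)
    (huu : S.bracket (cond αu y x) (cond αu y x) ∉ S.dcs 2) :
    ∀ k, 1 ≤ k → k ≤ N → S.Chain x y αu k := by
  intro k hk
  induction k, hk using Nat.le_induction with
  | base => exact fun _ => chain_one hx hy huu
  | succ k hk ih =>
    intro hkN
    have := hrank k hk (by omega)
    have := hrank (k + 1) (by omega) hkN
    exact chain_succ hx hy hxy htop (by omega) (hlt (k + 1) hkN).not_ge (ih (by omega))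

lemma rmul_add_smul_pow_apply_eq_zero {n m : ℕ} (hchar : S.charSeqLE n m) {x z : V}
    (hx : x ∈ S.L0) (hx1 : x ∉ S.dcs 1) (hz : z ∈ S.L0) (hz1 : z ∈ S.dcs 1) (c : ℂ) :
    (∀ v ∈ S.L0, ((S.rmul x + c • S.rmul z) ^ (n - 2)) v = 0) ∧
      ∀ v ∈ S.L1, ((S.rmul x + c • S.rmul z) ^ (m - 1)) v = 0 := by
  have hxz : x + c • z ∉ S.dcs0 1 := fun h =>
    hx1 (by simpa using sub_mem (dcs0_one_le_dcs_one h) (smul_mem _ c hz1))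
  have := hchar _ (add_mem hx (smul_mem _ c hz)) hxz
  rwa [map_add, map_smul] at this

lemma rmul_pow_mul_rmul_pow_apply_mem {n m : ℕ} (hchar : S.charSeqLE n m) {x y : V}
    (hx : x ∈ S.L0) (hx1 : x ∉ S.dcs 1) (hy : y ∈ S.L1) (hxy : S.bracket x y ∈ S.dcs 2)
    {αu : Bool} {a b : ℕ} (hab : a + b = n + m - 2)
    (heven : (αu ^^ b.bodd) = false → b < 2 * m) (hodd : (αu ^^ b.bodd) = true → b + 2 ≤ 2 * n) :
    (S.rmul x ^ a * S.rmul y ^ b) (cond αu y x) ∈ S.dcs (a + b + 1) := by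
  set z := S.bracket y y
  have hz : z ∈ S.L0 := S.g11 y hy y hy
  have hz1 : z ∈ S.dcs 1 := bracket_mem_dcs_succ (mem_dcs_zero y) y
  have hxz : S.bracket x z ∈ S.dcs 3 := by
    rw [S.super_jacobi x true true y y hy hy]
    simpa using add_mem (bracket_mem_dcs_succ hxy y) (bracket_mem_dcs_succ hxy y)
  have hP : Raises S.dcs (S.rmul x) 1 := raises_rmul (mem_dcs_zero x)
  have hQP := rmul_mul_sub_mul_rmul (β := false) hx hz ▸ raises_rmul hxz
  have hkill := fun {v ℓ K A H} => pow_mul_pow_apply_mem_of_le (v := v) (ℓ := ℓ) (K := K)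
    (A := A) (H := H) S.dcs_antitone_s2 hP (raises_rmul hz1) hQP
  have hfam := rmul_add_smul_pow_apply_eq_zero hchar hx hx1 hz hz1
  obtain ⟨h, rfl | rfl⟩ := Nat.even_or_odd' b <;> cases αu
  · have hb := heven (by simp)
    rw [rmul_pow_two_mul hy, mul_smul_comm, LinearMap.smul_apply]
    exact smul_mem _ _ (S.dcs_antitone_s2 (by omega)
      (hkill (mem_dcs_zero x) (fun c => (hfam c).1 x hx) (K := n - 2) (by omega)))
  · have hb := hodd (by simp)
    rw [rmul_pow_two_mul hy, mul_smul_comm, LinearMap.smul_apply]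
    exact smul_mem _ _ (S.dcs_antitone_s2 (by omega)
      (hkill (mem_dcs_zero y) (fun c => (hfam c).2 y hy) (K := m - 1) (by omega)))
  · have := ((raises_rmul (mem_dcs_zero x)).pow a).mul
      ((raises_rmul (mem_dcs_zero y)).pow (2 * h)) _ _ hxy
    rw [pow_succ, ← mul_assoc, Module.End.mul_apply]
    exact S.dcs_antitone_s2 (by omega) this
  · have hb := heven (by simp)
    rw [pow_succ, ← mul_assoc, Module.End.mul_apply, rmul_apply, rmul_pow_two_mul hy,
      mul_smul_comm, LinearMap.smul_apply]
    exact smul_mem _ _ (S.dcs_antitone_s2 (by omega)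
      (hkill hz1 (fun c => (hfam c).1 z hz) (K := n - 2) (by omega)))

end LeibnizSuper

open LeibnizSuper Module Submodule in
theorem leibnizSuper_nilindex_lt_of_mixed_generators_dimL03_le_general
    {V : Type} [AddCommGroup V] [Module ℂ V] [FiniteDimensional ℂ V]
    (S : LeibnizSuper V) (n m : ℕ) (hn : 3 ≤ n)
    (hdim0 : Module.finrank ℂ S.L0 = n) (hdim1 : Module.finrank ℂ S.L1 = m)
    (hnilp : ∃ s, S.dcs s = ⊥)
    (hchar : S.charSeqLE n m)
    (x₁ y₁ : V) (hx₁0 : x₁ ∈ S.L0) (hx₁ : x₁ ∉ S.dcs 1)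
    (hy₁1 : y₁ ∈ S.L1) (hy₁ : y₁ ∉ S.dcs 1)
    (hgen : S.generates {x₁, y₁})
    (hL3 : Module.finrank ℂ ↥(S.dcs 2 ⊓ S.L0) = n - 2) :
    S.dcs (n + m - 2) = ⊥ := by
  by_contra hN
  have htop := S.dcs_one_sup_span_eq_top hgen
  have hx₁n : S.gradedFinrank false 1 < n := hdim0 ▸ gradedFinrank_one_lt (α := false) hx₁0 hx₁
  have hy₁m : S.gradedFinrank true 1 < m := hdim1 ▸ gradedFinrank_one_lt (α := true) hy₁1 hy₁
  have hlt : ∀ k ≤ n + m - 2, S.dcs (k + 1) < S.dcs k := fun k => S.dcs_succ_lt hnilp hN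
  have hrank := apply_add_eq_of_forall_succ_lt (f := fun k => finrank ℂ (S.dcs k))
    (fun k hk => finrank_lt_finrank_of_lt (hlt k hk.le)) (by rw [S.finrank_dcs_eq_add 1]; omega)
    (Nat.pos_of_ne_zero fun h => hN (finrank_eq_zero.mp h))
  have hodd : ∀ v ∈ S.dcs 1 ⊓ S.L1, v ∈ S.dcs 2 := fun v hv => by_contra fun hv' => by
    have : S.gradedFinrank true 2 < S.gradedFinrank true 1 := gradedFinrank_succ_lt hv hv'
    have := S.finrank_dcs_eq_add 2
    have := hrank 2 (by omega) (by omega)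
    have : S.gradedFinrank false 2 = n - 2 := hL3
    omega
  have hxy := hodd _ ⟨bracket_mem_dcs_succ (mem_dcs_zero x₁) y₁, S.g01 x₁ hx₁0 y₁ hy₁1⟩
  have hyx := hodd _ ⟨bracket_mem_dcs_succ (mem_dcs_zero y₁) x₁, S.g10 y₁ hy₁1 x₁ hx₁0⟩
  obtain ⟨αu, hαu⟩ := exists_bracket_self_not_mem_dcs_two htop hxy hyx (hlt 1 (by omega)).not_ge
  obtain ⟨r, α, a, b, -, hr', hnf, hab, hα, h1, h0⟩ :=
    chain_of_le hx₁0 hy₁1 hxy htop hrank hlt hαu _ (by omega) le_rfl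
  have hw := rmul_pow_mul_rmul_pow_apply_mem hchar hx₁0 hx₁ hy₁1 hxy (αu := αu) hab
    (fun h => by cases hα.trans h; simp only [Bool.toNat_false] at h1; omega)
    (fun h => by cases hα.trans h; simp only [Bool.toNat_true] at h0; omega)
  rw [hab] at hw
  exact hr' (by simpa using add_mem hnf hw)

/-- Theorem 3.4 of the paper: case of one generator in `L₀`, one in
`L₁`, with `dim (L³)₀ = n - 2` and `dim L₀³ ≤ n - 4`.  The nilindex is less
than `n + m`, i.e. `L^{n+m-1} = 0`. -/
theorem leibnizSuper_nilindex_lt_of_mixed_generators_dimL03_le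
    {V : Type} [AddCommGroup V] [Module ℂ V] [FiniteDimensional ℂ V]
    (S : LeibnizSuper V) (n m : ℕ) (hn : 3 ≤ n) (hm : 2 ≤ m)
    (hdim0 : Module.finrank ℂ S.L0 = n) (hdim1 : Module.finrank ℂ S.L1 = m)
    (hnilp : ∃ s, S.dcs s = ⊥)
    (hchar : S.charSeqLE n m)
    (x₁ y₁ : V) (hx₁0 : x₁ ∈ S.L0) (hx₁ : x₁ ∉ S.dcs 1)
    (hy₁1 : y₁ ∈ S.L1) (hy₁ : y₁ ∉ S.dcs 1)
    (hgen : S.generates {x₁, y₁})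
    (hL3 : Module.finrank ℂ ↥(S.dcs 2 ⊓ S.L0) = n - 2)
    (hL03 : Module.finrank ℂ ↥(S.dcs0 2) + 4 ≤ n) :
    S.dcs (n + m - 2) = ⊥ :=
  leibnizSuper_nilindex_lt_of_mixed_generators_dimL03_le_general S n m hn hdim0 hdim1 hnilp hchar x₁
    y₁ hx₁0 hx₁ hy₁1 hy₁ hgen hL3
end
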